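/- Set J₀ := {0} × J, an ideal of A⋈^f J. The map sending a prime ideal Q of B to Q̄^f := {(a, f(a)+j) : a ∈ A, j ∈ J, f(a)+j ∈ Q} is a homeomorphism from the subspace Spec(B) \ V(J) of Spec(B) (prime ideals of B not containing J) onto the subspace Spec(A⋈^f J) \ V(J₀) (prime ideals of A⋈^f J not containing J₀), where both subspaces carry the Zariski topology. -/

import Mathlib

/-!
The projection `p_B : A ⋈^f J → B` maps `J₀ = {0} × J` bijectively onto `J`, and `Q̄^f = p_B⁻¹(Q)`.
Any ring map `φ : R → S` carrying an ideal `I` bijectively onto an ideal `K` identifies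
`Spec S \ V(K)` with `Spec R \ V(I)` via `𝔓 ↦ φ⁻¹(𝔓)`, with inverse `𝔮 ↦ {s | K s ⊆ φ(I ∩ 𝔮)}`.
For a fixed `i₀ ∈ I \ 𝔮`, an element `s` lies in this ideal iff the unique `i ∈ I` with
`φ i = φ i₀ * s` lies in `𝔮`; injectivity of `φ` on `I` and primality of `𝔮` make this independent
of `i₀`, which yields primality and both inverse identities. The complement of the ideal is a
union of basic opens `D(i)`, `i ∈ I`, so the inverse is continuous.
-/

section Amalgamation

variable {A B : Type*} [CommRing A] [CommRing B]

/-- The amalgamation `A ⋈^f J` of `A` with `B` along the ideal `J` of `B` with respect to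
the ring homomorphism `f : A → B`, realized as the subring
`{(a, f a + j) | a ∈ A, j ∈ J}` of `A × B`. -/
def amalg (f : A →+* B) (J : Ideal B) : Subring (A × B) where
  carrier := {x : A × B | x.2 - f x.1 ∈ J}
  zero_mem' := by simp
  one_mem' := by simp
  add_mem' := by
    intro x y hx hy
    simp only [Set.mem_setOf_eq, Prod.fst_add, Prod.snd_add, map_add] at *
    have h : x.2 + y.2 - (f x.1 + f y.1) = x.2 - f x.1 + (y.2 - f y.1) := by ring
    rw [h]; exact J.add_mem hx hy
  neg_mem' := by
    intro x hx
    simp only [Set.mem_setOf_eq, Prod.fst_neg, Prod.snd_neg, map_neg] at *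
    have h : -x.2 - -f x.1 = -(x.2 - f x.1) := by ring
    rw [h]; exact J.neg_mem hx
  mul_mem' := by
    intro x y hx hy
    simp only [Set.mem_setOf_eq, Prod.fst_mul, Prod.snd_mul, map_mul] at *
    have h : x.2 * y.2 - f x.1 * f y.1 = x.2 * (y.2 - f y.1) + (x.2 - f x.1) * f y.1 := by ring
    rw [h]
    exact J.add_mem (J.mul_mem_left _ hy) (J.mul_mem_right _ hx)

lemma mem_amalg_iff (f : A →+* B) (J : Ideal B) (x : A × B) :
    x ∈ amalg f J ↔ x.2 - f x.1 ∈ J := Iff.rfl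

/-- The natural projection `p_A : A ⋈^f J → A`. -/
def pA (f : A →+* B) (J : Ideal B) : amalg f J →+* A :=
  (RingHom.fst A B).comp (amalg f J).subtype

/-- The natural projection `p_B : A ⋈^f J → B`. -/
def pB (f : A →+* B) (J : Ideal B) : amalg f J →+* B :=
  (RingHom.snd A B).comp (amalg f J).subtype

/-- For an ideal `Q` of `B`, the ideal `Q̄^f = {(a, f a + j) | a ∈ A, j ∈ J, f a + j ∈ Q}`
of `A ⋈^f J`. -/
def idealQf (f : A →+* B) (J : Ideal B) (Q : Ideal B) : Ideal (amalg f J) :=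
  Submodule.copy (Ideal.comap (pB f J) Q)
    {x : amalg f J | ∃ a : A, ∃ j ∈ J, (x : A × B) = (a, f a + j) ∧ f a + j ∈ Q}
    (by
      ext x
      simp only [Set.mem_setOf_eq, SetLike.mem_coe, Ideal.mem_comap]
      constructor
      · rintro ⟨a, j, hj, hx, hQ⟩
        have h1 : pB f J x = f a + j := by
          show (x : A × B).2 = f a + j
          rw [hx]
        rw [h1]; exact hQ
      · intro hx
        refine ⟨(x : A × B).1, (x : A × B).2 - f (x : A × B).1,
          (mem_amalg_iff f J _).mp x.2, by ext <;> simp, ?_⟩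
        have hx' : (x : A × B).2 ∈ Q := hx
        simpa using hx')

/-- The ideal `J₀ = {0} × J` of `A ⋈^f J`. -/
def J0 (f : A →+* B) (J : Ideal B) : Ideal (amalg f J) :=
  Submodule.copy (RingHom.ker (pA f J))
    {x : amalg f J | (x : A × B).1 = 0 ∧ (x : A × B).2 ∈ J}
    (by
      ext x
      simp only [Set.mem_setOf_eq, SetLike.mem_coe, RingHom.mem_ker]
      constructor
      · rintro ⟨h0, _⟩; exact h0
      · intro h0
        have h0' : (x : A × B).1 = 0 := h0
        refine ⟨h0', ?_⟩
        have h2 := (mem_amalg_iff f J _).mp x.2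
        rw [h0', map_zero, sub_zero] at h2
        exact h2)

end Amalgamation

namespace Ideal

variable {R S : Type*} [CommRing R] [CommRing S]

def imageColon (φ : R →+* S) (I : Ideal R) (K : Ideal S) (q : Ideal R) : Ideal S where
  carrier := {s | ∀ k ∈ K, ∃ i ∈ I ⊓ q, φ i = k * s}
  add_mem' := by
    rintro s t hs ht k hk
    obtain ⟨i, hi, his⟩ := hs k hk
    obtain ⟨j, hj, hjt⟩ := ht k hk
    exact ⟨i + j, add_mem hi hj, by rw [map_add, his, hjt, mul_add]⟩
  zero_mem' := fun _ _ => ⟨0, zero_mem _, by rw [map_zero, mul_zero]⟩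
  smul_mem' := by
    rintro c s hs k hk
    obtain ⟨i, hi, his⟩ := hs (k * c) (K.mul_mem_right c hk)
    exact ⟨i, hi, by rw [his, smul_eq_mul, mul_assoc]⟩

variable {φ : R →+* S} {I : Ideal R} {K : Ideal S} {q : Ideal R} {i₀ : R}

section

variable (hφ : Set.BijOn φ I K) (hq : q.IsPrime) (hi₀ : i₀ ∈ I) (hi₀q : i₀ ∉ q)
include hφ hq hi₀ hi₀q

theorem mem_imageColon_iff {i : R} (hi : i ∈ I) {s : S} (h : φ i = φ i₀ * s) :
    s ∈ imageColon φ I K q ↔ i ∈ q := by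
  constructor
  · intro hs
    obtain ⟨i', ⟨hi'I, hi'q⟩, hi'⟩ := hs (φ i₀) (hφ.mapsTo hi₀)
    rwa [← hφ.injOn hi'I hi (hi'.trans h.symm)]
  · intro hiq k hk
    obtain ⟨j, hj, rfl⟩ := hφ.surjOn hk
    obtain ⟨j', hj', hj's⟩ := hφ.surjOn (K.mul_mem_right s (hφ.mapsTo hj))
    refine ⟨j', ⟨hj', ?_⟩, hj's⟩
    have : i₀ * j' = j * i := hφ.injOn (I.mul_mem_left _ hj') (I.mul_mem_right _ hj) <| by
      rw [map_mul, map_mul, hj's, h]; ring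
    exact (hq.mem_or_mem (this ▸ q.mul_mem_left j hiq)).resolve_left hi₀q

theorem notMem_imageColon_iff {s : S} :
    s ∉ imageColon φ I K q ↔ ∃ i ∈ I, ∃ i' ∈ I, φ i' = φ i * s ∧ i' ∉ q := by
  constructor
  · intro hs
    obtain ⟨i', hi', hi's⟩ := hφ.surjOn (K.mul_mem_right s (hφ.mapsTo hi₀))
    exact ⟨i₀, hi₀, i', hi', hi's, (mem_imageColon_iff hφ hq hi₀ hi₀q hi' hi's).not.1 hs⟩
  · rintro ⟨i, hi, i', hi', hi's, hi'q⟩ hs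
    obtain ⟨i'', ⟨hi''I, hi''q⟩, hi''⟩ := hs (φ i) (hφ.mapsTo hi)
    exact hi'q (hφ.injOn hi''I hi' (hi''.trans hi's.symm) ▸ hi''q)

end

theorem comap_imageColon (hφ : Set.BijOn φ I K) (hq : q.IsPrime) (hI : ¬ I ≤ q) :
    (imageColon φ I K q).comap φ = q := by
  obtain ⟨i₀, hi₀, hi₀q⟩ := SetLike.not_le_iff_exists.1 hI
  ext x
  rw [mem_comap, mem_imageColon_iff hφ hq hi₀ hi₀q (I.mul_mem_right x hi₀) (map_mul φ i₀ x)]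
  exact ⟨fun h => (hq.mem_or_mem h).resolve_left hi₀q, q.mul_mem_left i₀⟩

theorem not_le_imageColon (hφ : Set.BijOn φ I K) (hq : q.IsPrime) (hI : ¬ I ≤ q) :
    ¬ K ≤ imageColon φ I K q := by
  obtain ⟨i₀, hi₀, hi₀q⟩ := SetLike.not_le_iff_exists.1 hI
  intro hK
  exact hi₀q (comap_imageColon hφ hq hI ▸ hK (hφ.mapsTo hi₀))

theorem isPrime_imageColon (hφ : Set.BijOn φ I K) (hq : q.IsPrime) (hI : ¬ I ≤ q) :
    (imageColon φ I K q).IsPrime := by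
  obtain ⟨i₀, hi₀, hi₀q⟩ := SetLike.not_le_iff_exists.1 hI
  have hi₀₀ : i₀ * i₀ ∈ I := I.mul_mem_left _ hi₀
  have hi₀₀q : i₀ * i₀ ∉ q := fun h => hi₀q ((hq.mem_or_mem h).elim id id)
  refine ⟨fun htop => hi₀q ?_, fun {s t} hst => ?_⟩
  · exact (mem_imageColon_iff hφ hq hi₀ hi₀q hi₀ (mul_one _).symm).1 (htop ▸ Submodule.mem_top)
  obtain ⟨i, hi, his⟩ := hφ.surjOn (K.mul_mem_right s (hφ.mapsTo hi₀))
  obtain ⟨j, hj, hjt⟩ := hφ.surjOn (K.mul_mem_right t (hφ.mapsTo hi₀))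
  have hij : φ (i * j) = φ (i₀ * i₀) * (s * t) := by rw [map_mul, map_mul, his, hjt]; ring
  rw [mem_imageColon_iff hφ hq hi₀₀ hi₀₀q (I.mul_mem_right j hi) hij] at hst
  rw [mem_imageColon_iff hφ hq hi₀ hi₀q hi his, mem_imageColon_iff hφ hq hi₀ hi₀q hj hjt]
  exact hq.mem_or_mem hst

theorem imageColon_comap (hφ : Set.BijOn φ I K) {P : Ideal S} (hP : P.IsPrime) (hi₀ : i₀ ∈ I)
    (hi₀P : φ i₀ ∉ P) : imageColon φ I K (P.comap φ) = P := by
  ext s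
  obtain ⟨i, hi, his⟩ := hφ.surjOn (K.mul_mem_right s (hφ.mapsTo hi₀))
  rw [mem_imageColon_iff hφ (hP.comap φ) hi₀ hi₀P hi his, mem_comap, his]
  exact ⟨fun h => (hP.mem_or_mem h).resolve_left hi₀P, P.mul_mem_left _⟩

end Ideal

namespace PrimeSpectrum

open Ideal

variable {R S : Type*} [CommRing R] [CommRing S] {φ : R →+* S} {I : Ideal R} {K : Ideal S}

theorem not_le_comap_of_bijOn (hφ : Set.BijOn φ I K) {p : PrimeSpectrum S}
    (hp : ¬ K ≤ p.asIdeal) : ¬ I ≤ (comap φ p).asIdeal := by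
  obtain ⟨k, hk, hkp⟩ := SetLike.not_le_iff_exists.1 hp
  obtain ⟨i, hi, rfl⟩ := hφ.surjOn hk
  exact fun h => hkp (h hi)

theorem isOpen_setOf_notMem_imageColon (hφ : Set.BijOn φ I K) (s : S) :
    IsOpen {q : {q : PrimeSpectrum R // ¬ I ≤ q.asIdeal} | s ∉ imageColon φ I K q.1.asIdeal} := by
  have : {q : {q : PrimeSpectrum R // ¬ I ≤ q.asIdeal} | s ∉ imageColon φ I K q.1.asIdeal} =
      Subtype.val ⁻¹' ⋃ i ∈ I, ⋃ i' ∈ I, ⋃ (_ : φ i' = φ i * s), (basicOpen i' : Set _) := by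
    ext ⟨q, hq⟩
    obtain ⟨i₀, hi₀, hi₀q⟩ := SetLike.not_le_iff_exists.1 hq
    simp only [Set.mem_ofPred_eq, Set.mem_preimage, Set.mem_iUnion, SetLike.mem_coe,
      mem_basicOpen, exists_prop]
    exact notMem_imageColon_iff hφ q.isPrime hi₀ hi₀q
  rw [this]
  exact continuous_subtype_val.isOpen_preimage _ <|
    isOpen_biUnion fun _ _ => isOpen_biUnion fun _ _ => isOpen_iUnion fun _ => isOpen_basicOpen

def comapHomeomorphOfBijOn (hφ : Set.BijOn φ I K) :
    {p : PrimeSpectrum S // ¬ K ≤ p.asIdeal} ≃ₜ {q : PrimeSpectrum R // ¬ I ≤ q.asIdeal} where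
  toFun p := ⟨comap φ p.1, not_le_comap_of_bijOn hφ p.2⟩
  invFun q :=
    ⟨⟨imageColon φ I K q.1.asIdeal, isPrime_imageColon hφ q.1.isPrime q.2⟩,
      not_le_imageColon hφ q.1.isPrime q.2⟩
  left_inv := by
    rintro ⟨p, hp⟩
    obtain ⟨k, hk, hkp⟩ := SetLike.not_le_iff_exists.1 hp
    obtain ⟨i₀, hi₀, rfl⟩ := hφ.surjOn hk
    exact Subtype.ext <| PrimeSpectrum.ext <| imageColon_comap hφ p.isPrime hi₀ hkp
  right_inv := by
    rintro ⟨q, hq⟩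
    exact Subtype.ext <| PrimeSpectrum.ext <| comap_imageColon hφ q.isPrime hq
  continuous_toFun := ((continuous_comap φ).comp continuous_subtype_val).subtype_mk _
  continuous_invFun := by
    refine Continuous.subtype_mk ?_ _
    rw [isTopologicalBasis_basic_opens.continuous_iff]
    rintro _ ⟨s, rfl⟩
    exact isOpen_setOf_notMem_imageColon hφ s

end PrimeSpectrum

theorem bijOn_pB_J0 {A B : Type*} [CommRing A] [CommRing B] (f : A →+* B) (J : Ideal B) :
    Set.BijOn (pB f J) (J0 f J) J :=
  ⟨fun x hx => hx.2, fun x hx y hy hxy => Subtype.ext (Prod.ext (hx.1.trans hy.1.symm) hxy),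
    fun j hj => ⟨⟨(0, j), by simpa [mem_amalg_iff] using hj⟩, ⟨rfl, hj⟩, rfl⟩⟩

/-- The map `Q ↦ Q̄^f` is a homeomorphism of `Spec B \ V(J)` onto
`Spec (A ⋈^f J) \ V(J₀)` (with the subspace Zariski topologies). -/
theorem stmt5 {A B : Type*} [CommRing A] [CommRing B] (f : A →+* B) (J : Ideal B) :
    ∃ h : {p : PrimeSpectrum B // ¬ J ≤ p.asIdeal} ≃ₜ
          {q : PrimeSpectrum (amalg f J) // ¬ J0 f J ≤ q.asIdeal},
      ∀ p : {p : PrimeSpectrum B // ¬ J ≤ p.asIdeal},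
        ((h p : PrimeSpectrum (amalg f J)).asIdeal
          = idealQf f J (p : PrimeSpectrum B).asIdeal) := by
  refine ⟨PrimeSpectrum.comapHomeomorphOfBijOn (bijOn_pB_J0 f J), fun p =>
    (Submodule.copy_eq _ _ _).symm⟩
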